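/- Appending a response event res(c) to a trace t, when eff(c) already occurs in t and the partial order <_{P_M} allows t, yields a trace allowed by <_{P_M}, assuming the axiom that any event enforced before a response (other than the operation's effect) is also enforced before the corresponding invocation. -/

import Mathlib

inductive Event (T PS Op Val : Type) : Type
  | step : T → PS → Event T PS Op Val
  | effS : T → PS → Event T PS Op Val
  | inv  : Op → Val → Event T PS Op Val
  | res  : Op → Val → Event T PS Op Val
  | effO : Op → Val → Event T PS Op Val

namespace Event

variable {T PS Op Val : Type}

/-- `precedes t a b`: `a` occurs at an earlier index than `b` in the trace `t`. -/
def precedes (t : List (Event T PS Op Val)) (a b : Event T PS Op Val) : Prop :=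
  ∃ i j : ℕ, i < j ∧ t[i]? = some a ∧ t[j]? = some b

/-- Program events: program steps and their effects. -/
def IsProgEvent : Event T PS Op Val → Prop
  | step _ _ => True
  | effS _ _ => True
  | _ => False

/-- Invocation or response event. -/
def isIR : Event T PS Op Val → Bool
  | inv _ _ => true
  | res _ _ => true
  | _ => false

/-- Restriction of a trace to its invocation and response events. -/
def restrictIR (t : List (Event T PS Op Val)) : List (Event T PS Op Val) := t.filter isIR

/-- Well-formedness of traces: invocations precede matching responses and effects,
program steps precede their effects, and response/effect outputs agree. -/
def WellFormed (t : List (Event T PS Op Val)) : Prop :=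
  (∀ (j : ℕ) a out, (t[j]? = some (res a out) ∨ t[j]? = some (effO a out)) →
      ∃ i inp, i < j ∧ t[i]? = some (inv a inp)) ∧
  (∀ (j : ℕ) τ p, t[j]? = some (effS τ p) → ∃ i, i < j ∧ t[i]? = some (step τ p)) ∧
  (∀ a outr oute, res a outr ∈ t → effO a oute ∈ t → outr = oute)

/-- `ext t`: the extensions of trace `t` by a sequence of response events. -/
def ext (t : List (Event T PS Op Val)) : Set (List (Event T PS Op Val)) :=
  {u | ∃ tr, u = t ++ tr ∧ (∀ e ∈ tr, ∃ c v, e = res c v) ∧ u.Nodup}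

open Classical in
/-- `comp t` removes from `t` every invocation with neither a later response
nor a later operation effect. -/
noncomputable def comp : List (Event T PS Op Val) → List (Event T PS Op Val)
  | [] => []
  | e :: rest =>
    if ∃ a inp, e = inv a inp ∧ ∀ out, res a out ∉ rest ∧ effO a out ∉ rest
    then comp rest
    else e :: comp rest

/-- `Allows R t` : the (partial) order `R` allows the trace `t`. -/
def Allows (R : Event T PS Op Val → Event T PS Op Val → Prop)
    (t : List (Event T PS Op Val)) : Prop :=
  ∀ a b, R a b → b ∈ t → precedes t a b

/-- The operation order `⪯_t`: pairs `(res c, inv d)` with the response before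
the invocation in `t`. -/
def OpOrd (t : List (Event T PS Op Val)) (e e' : Event T PS Op Val) : Prop :=
  (∃ c v, e = res c v) ∧ (∃ d w, e' = inv d w) ∧ precedes t e e'

/-- Atomic history: every invocation is immediately followed by its response and
every response immediately preceded by its invocation. -/
def Atomic (h : List (Event T PS Op Val)) : Prop :=
  (∀ i a inp, h[i]? = some (inv a inp) → ∃ out, h[i + 1]? = some (res a out)) ∧
  (∀ i a out, h[i]? = some (res a out) → ∃ j inp, i = j + 1 ∧ h[j]? = some (inv a inp))

/-- The thread of an object event (invocation or response), if any. -/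
def objThread (thread : Op → T) : Event T PS Op Val → Option T
  | inv o _ => some (thread o)
  | res o _ => some (thread o)
  | _ => none

/-- Thread equivalence: equal per-thread subsequences of invocations and responses. -/
def threadEquiv [DecidableEq T] (thread : Op → T) (t h : List (Event T PS Op Val)) : Prop :=
  ∀ τ : T, t.filter (fun e => decide (objThread thread e = some τ)) =
           h.filter (fun e => decide (objThread thread e = some τ))

open Classical in
/-- The transformation function `trans` of the soundness proof (cases (T1)–(T5)). -/
noncomputable def trans : List (Event T PS Op Val) → List (Event T PS Op Val) →
    List (Event T PS Op Val) → List (Event T PS Op Val)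
  | t, h', r =>
    if h5 : ∃ a inp out, h'.head? = some (inv a inp) ∧ inv a inp ∈ r ∧ res a out ∈ t then
      -- (T5)
      let a := h5.choose
      let inp := h5.choose_spec.choose
      let out := h5.choose_spec.choose_spec.choose
      inv a inp :: effO a out :: res a out ::
        trans t h'.tail.tail (r.eraseP (fun e => decide (e = inv a inp)))
    else
      match t with
      | [] => []
      | .inv a inp :: ts =>
          if h1 : h'.head? = some (inv a inp) ∧ ∃ out, res a out ∈ (inv a inp :: ts) then
            -- (T1)
            inv a inp :: effO a h1.2.choose :: res a h1.2.choose ::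
              trans ts h'.tail.tail r
          else
            -- (T2)
            trans ts h' (r ++ [inv a inp])
      | .res _ _ :: ts => trans ts h' r        -- (T3)
      | .effO _ _ :: ts => trans ts h' r       -- (T3)
      | .step s p :: ts => step s p :: trans ts h' r   -- (T4)
      | .effS s p :: ts => effS s p :: trans ts h' r   -- (T4)
  termination_by t h' r => t.length + h'.length
  decreasing_by
    · obtain ⟨a, inp, out, hh, -, -⟩ := h5
      have hne : h' ≠ [] := by intro hcon; subst hcon; simp at hh
      have h0 : 0 < h'.length := by cases h' with
        | nil => exact absurd rfl hne
        | cons _ _ => simp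
      simp_wf
      omega
    all_goals simp_wf
    all_goals omega

/-- Atomic-style traces: blocks `[inv a in, eff a out, res a out]` interleaved with
program events, each operation appearing in exactly one block. -/
inductive AtomicStyle : List (Event T PS Op Val) → Prop
  | nil : AtomicStyle []
  | prog {e : Event T PS Op Val} {t : List (Event T PS Op Val)} :
      IsProgEvent e → AtomicStyle t → AtomicStyle (e :: t)
  | block {a : Op} {inp out : Val} {t : List (Event T PS Op Val)} :
      (∀ v : Val, inv a v ∉ t ∧ res a v ∉ t ∧ effO a v ∉ t) →
      AtomicStyle t →
      AtomicStyle (inv a inp :: effO a out :: res a out :: t)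

end Event

namespace Event

variable {T PS Op Val : Type}

theorem precedes.append_right {t : List (Event T PS Op Val)} {x y : Event T PS Op Val}
    (h : precedes t x y) (s : List (Event T PS Op Val)) : precedes (t ++ s) x y := by
  obtain ⟨i, j, hij, hi, hj⟩ := h
  have hj_lt : j < t.length := (List.getElem?_eq_some_iff.mp hj).1
  refine ⟨i, j, hij, ?_, ?_⟩
  · rwa [List.getElem?_append_left (hij.trans hj_lt)]
  · rwa [List.getElem?_append_left hj_lt]

theorem precedes.mem_left {t : List (Event T PS Op Val)} {x y : Event T PS Op Val}
    (h : precedes t x y) : x ∈ t := by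
  obtain ⟨i, -, -, hi, -⟩ := h
  exact List.mem_of_getElem? hi

theorem precedes_append_singleton_of_mem {t : List (Event T PS Op Val)} {x : Event T PS Op Val}
    (hx : x ∈ t) (y : Event T PS Op Val) : precedes (t ++ [y]) x y := by
  obtain ⟨i, hi, rfl⟩ := List.getElem_of_mem hx
  exact ⟨i, t.length, hi, by simp [List.getElem?_append_left hi], by simp⟩

theorem Allows.append_singleton {R : Event T PS Op Val → Event T PS Op Val → Prop}
    {t : List (Event T PS Op Val)} {b : Event T PS Op Val} (hall : Allows R t)
    (hb : ∀ e, R e b → e ∈ t) : Allows R (t ++ [b]) := by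
  intro e b' hR hb'
  rcases List.mem_append.mp hb' with hb't | hb'b
  · exact precedes.append_right (hall e b' hR hb't) _
  · obtain rfl := List.mem_singleton.mp hb'b
    exact precedes_append_singleton_of_mem (hb e hR) b'

theorem WellFormed.exists_inv_mem_of_append_res {t : List (Event T PS Op Val)} {a : Op}
    {out : Val} (hwf : WellFormed (t ++ [res a out])) : ∃ inp, inv a inp ∈ t := by
  obtain ⟨i, inp, hi_lt, hi⟩ := hwf.1 t.length a out (Or.inl (by simp))
  rw [List.getElem?_append_left hi_lt] at hi
  exact ⟨inp, List.mem_of_getElem? hi⟩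

end Event

theorem stmt2_general {T PS Op Val : Type}
    (R : Event T PS Op Val → Event T PS Op Val → Prop)
    (hAx : ∀ (a : Op) (inp out : Val) (e : Event T PS Op Val),
      e ≠ Event.effO a out → (R e (Event.res a out) ↔ R e (Event.inv a inp)))
    (t : List (Event T PS Op Val)) (a : Op) (out : Val)
    (hwf : Event.WellFormed (t ++ [Event.res a out]))
    (heff : Event.effO a out ∈ t)
    (hall : Event.Allows R t) :
    Event.Allows R (t ++ [Event.res a out]) := by
  refine hall.append_singleton fun e hR => ?_
  by_cases he : e = Event.effO a out
  · exact he ▸ heff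
  · obtain ⟨inp, hinv⟩ := hwf.exists_inv_mem_of_append_res
    -- By the axiom, `e` is also enforced before the invocation, which `t` already contains.
    exact (hall e _ ((hAx a inp out e he).mp hR) hinv).mem_left

/-- Appending a response `res a out` to a trace `t`, when `eff a out`
already occurs in `t` and `R` allows `t`, yields a trace allowed by `R`, under the
axiom that any event enforced before a response (other than the operation's effect)
is also enforced before the corresponding invocation. -/
theorem stmt2 {T PS Op Val : Type}
    (R : Event T PS Op Val → Event T PS Op Val → Prop)
    (hAx : ∀ (a : Op) (inp out : Val) (e : Event T PS Op Val),
      e ≠ Event.effO a out → (R e (Event.res a out) ↔ R e (Event.inv a inp)))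
    (t : List (Event T PS Op Val)) (a : Op) (out : Val)
    (hnd : (t ++ [Event.res a out]).Nodup)
    (hwf : Event.WellFormed (t ++ [Event.res a out]))
    (heff : Event.effO a out ∈ t)
    (hall : Event.Allows R t) :
    Event.Allows R (t ++ [Event.res a out]) :=
  stmt2_general R hAx t a out hwf heff hall
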